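/- arXiv:2107.13899 — 2 statements merged into one kernel-verified Lean document; each statement's English description precedes it below -/
import Mathlib

section
/- Let A, B > 0, γ ≥ 2 and N ≥ 3 an integer. Define Σ_ν = {σ ∈ (0,∞) : A·σ^((N-2)/N) < σ + B·ν·σ^((γ/2)·(N-2)/N)}. Then for every ε > 0 there exists ν̃ > 0 such that for all 0 < ν < ν̃, the infimum of Σ_ν is strictly greater than (1-ε)·A^(N/2). -/
set_option maxHeartbeats 1000000


theorem stmt2 (A B γ : ℝ) (hA : 0 < A) (hB : 0 < B) (hγ : 2 ≤ γ)
    (N : ℕ) (hN : 3 ≤ N) :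
    ∀ ε > (0 : ℝ), ∃ ν' > (0 : ℝ), ∀ ν : ℝ, 0 < ν → ν < ν' →
      (1 - ε) * A ^ ((N : ℝ) / 2) <
        sInf {σ : ℝ | 0 < σ ∧
          A * σ ^ (((N : ℝ) - 2) / N) < σ + B * ν * σ ^ ((γ / 2) * (((N : ℝ) - 2) / N))} := by
  intro ε hε
  have hN3 : (3 : ℝ) ≤ (N : ℝ) := by exact_mod_cast hN
  have hNpos : (0 : ℝ) < N := by linarith
  set δ : ℝ := min ε 1 / 2 with hδdef
  have hδpos : 0 < δ := by
    have : 0 < min ε 1 := lt_min hε one_pos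
    linarith
  have hδlt : δ < ε := by
    have h1 : min ε 1 ≤ ε := min_le_left _ _
    linarith
  have hδle : δ ≤ 1 / 2 := by
    have h1 : min ε 1 ≤ 1 := min_le_right _ _
    linarith
  set a : ℝ := ((N : ℝ) - 2) / N with hadef
  have ha0 : 0 < a := div_pos (by linarith) hNpos
  have h1a : 2 / (N : ℝ) + a = 1 := by
    rw [hadef]; field_simp; ring
  set e : ℝ := (γ / 2 - 1) * a with hedef
  have he : 0 ≤ e := by
    apply mul_nonneg _ ha0.le
    linarith
  set M : ℝ := A ^ ((N : ℝ) / 2) with hMdef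
  have hM : 0 < M := Real.rpow_pos_of_pos hA _
  set C : ℝ := (max 1 M) ^ e with hCdef
  have hCpos : 0 < C := Real.rpow_pos_of_pos (lt_of_lt_of_le one_pos (le_max_left _ _)) _
  set K : ℝ := (1 - δ) ^ (2 / (N : ℝ)) with hKdef
  have h1δ0 : 0 < 1 - δ := by linarith
  have h1δ1 : 1 - δ < 1 := by linarith
  have hK0 : 0 < K := Real.rpow_pos_of_pos h1δ0 _
  have hK1 : K < 1 := Real.rpow_lt_one h1δ0.le h1δ1 (by positivity)
  have hKM : K ^ ((N : ℝ) / 2) = 1 - δ := by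
    rw [hKdef, ← Real.rpow_mul h1δ0.le]
    rw [show 2 / (N : ℝ) * ((N : ℝ) / 2) = 1 by field_simp]
    exact Real.rpow_one _
  refine ⟨A * (1 - K) / (B * C),
    div_pos (mul_pos hA (by linarith)) (mul_pos hB hCpos), ?_⟩
  intro ν hν hνlt
  set S : Set ℝ := {σ : ℝ | 0 < σ ∧
      A * σ ^ a < σ + B * ν * σ ^ ((γ / 2) * a)} with hSdef
  -- nonempty
  have hmem : M + 1 ∈ S := by
    constructor
    · linarith
    · have h1 : A < (M + 1) ^ (2 / (N : ℝ)) := by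
        have hMA : M ^ (2 / (N : ℝ)) = A := by
          rw [hMdef, ← Real.rpow_mul hA.le]
          rw [show (N : ℝ) / 2 * (2 / (N : ℝ)) = 1 by field_simp]
          exact Real.rpow_one _
        calc A = M ^ (2 / (N : ℝ)) := hMA.symm
          _ < (M + 1) ^ (2 / (N : ℝ)) :=
            Real.rpow_lt_rpow hM.le (by linarith) (by positivity)
      have h2 : A * (M + 1) ^ a < (M + 1) := by
        have hsplit : (M + 1) = (M + 1) ^ (2 / (N : ℝ)) * (M + 1) ^ a := by
          rw [← Real.rpow_add (by linarith : (0:ℝ) < M + 1), h1a, Real.rpow_one]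
        have hpa : 0 < (M + 1) ^ a := Real.rpow_pos_of_pos (by linarith) _
        calc A * (M + 1) ^ a < (M + 1) ^ (2 / (N : ℝ)) * (M + 1) ^ a :=
              mul_lt_mul_of_pos_right h1 hpa
          _ = M + 1 := hsplit.symm
      have h3 : 0 < B * ν * (M + 1) ^ ((γ / 2) * a) := by positivity
      linarith
  -- every element exceeds (1-δ)*M
  have hlow : ∀ σ ∈ S, (1 - δ) * M < σ := by
    rintro σ ⟨hσ, hσlt⟩
    by_cases hcase : M < σ
    · nlinarith
    · push_neg at hcase
      have hsplit1 : σ ^ ((γ / 2) * a) = σ ^ e * σ ^ a := by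
        rw [← Real.rpow_add hσ, hedef]; ring_nf
      have hsplit2 : σ = σ ^ (2 / (N : ℝ)) * σ ^ a := by
        rw [← Real.rpow_add hσ, h1a, Real.rpow_one]
      have hpa : 0 < σ ^ a := Real.rpow_pos_of_pos hσ _
      have hdiv : A < σ ^ (2 / (N : ℝ)) + B * ν * σ ^ e := by
        have key : A * σ ^ a < σ ^ (2 / (N : ℝ)) * σ ^ a + B * ν * (σ ^ e * σ ^ a) := by
          rw [← hsplit1, ← hsplit2]; exact hσlt
        nlinarith
      have hσe : σ ^ e ≤ C := by
        rw [hCdef]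
        exact Real.rpow_le_rpow hσ.le (le_trans hcase (le_max_right 1 M)) he
      have hBνC : B * ν * C < A * (1 - K) := by
        have := mul_lt_mul_of_pos_right hνlt (by positivity : (0:ℝ) < B * C)
        calc B * ν * C = ν * (B * C) := by ring
          _ < A * (1 - K) / (B * C) * (B * C) := this
          _ = A * (1 - K) := by field_simp
      have hlb : K * A < σ ^ (2 / (N : ℝ)) := by
        have h1 : B * ν * σ ^ e ≤ B * ν * C := by
          apply mul_le_mul_of_nonneg_left hσe (by positivity)
        have hring : A - A * (1 - K) = K * A := by ring
        linarith
      have hfin : (K * A) ^ ((N : ℝ) / 2) < σ := by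
        have h1 : (K * A) ^ ((N : ℝ) / 2) < (σ ^ (2 / (N : ℝ))) ^ ((N : ℝ) / 2) :=
          Real.rpow_lt_rpow (by positivity) hlb (by positivity)
        have h2 : (σ ^ (2 / (N : ℝ))) ^ ((N : ℝ) / 2) = σ := by
          rw [← Real.rpow_mul hσ.le]
          rw [show 2 / (N : ℝ) * ((N : ℝ) / 2) = 1 by field_simp]
          exact Real.rpow_one _
        rwa [h2] at h1
      have h3 : (K * A) ^ ((N : ℝ) / 2) = (1 - δ) * M := by
        rw [Real.mul_rpow hK0.le hA.le, hKM, hMdef]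
      rwa [h3] at hfin
  have hInf : (1 - δ) * M ≤ sInf S :=
    le_csInf ⟨M + 1, hmem⟩ (fun σ hσ => (hlow σ hσ).le)
  calc (1 - ε) * M < (1 - δ) * M := by nlinarith
    _ ≤ sInf S := hInf
end

section
/- Let N ≥ 3, 2* = 2N/(N−2), and s₁, s₂ > 0. Define g(t) = ((1−t)s₁ + t s₂)/N · [ ((1−t)s₁ + t s₂) / ((1−t)^{2*/2} s₁ + t^{2*/2} s₂) ]^{(N−2)/2} for t ∈ (0,1). Then for all t ∈ (0,1), g(t) ≤ (s₁+s₂)/N, with equality at t = 1/2. -/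
theorem stmt16 (N : ℕ) (hN : 3 ≤ N) (p s₁ s₂ : ℝ)
    (hp : p = 2 * (N : ℝ) / ((N : ℝ) - 2))
    (hs₁ : 0 < s₁) (hs₂ : 0 < s₂)
    (g : ℝ → ℝ)
    (hg : ∀ t, g t = ((1 - t) * s₁ + t * s₂) / N *
      ((((1 - t) * s₁ + t * s₂) / ((1 - t) ^ (p / 2) * s₁ + t ^ (p / 2) * s₂)) ^
        (((N : ℝ) - 2) / 2))) :
    (∀ t ∈ Set.Ioo (0 : ℝ) 1, g t ≤ (s₁ + s₂) / N) ∧ g (1 / 2) = (s₁ + s₂) / N := by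
  have hN3 : (3 : ℝ) ≤ (N : ℝ) := by exact_mod_cast hN
  have hN2 : (0 : ℝ) < (N : ℝ) - 2 := by linarith
  have hNpos : (0 : ℝ) < (N : ℝ) := by linarith
  set q : ℝ := p / 2 with hqdef
  have hq : q = (N : ℝ) / ((N : ℝ) - 2) := by rw [hqdef, hp]; ring
  have hq1 : 1 ≤ q := by
    rw [hq, le_div_iff₀ hN2]; linarith
  set m : ℝ := ((N : ℝ) - 2) / 2 with hmdef
  have hm0 : 0 ≤ m := by positivity
  have hqm : (q - 1) * m = 1 := by
    rw [hq, hmdef]; field_simp; ring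
  set S : ℝ := s₁ + s₂ with hSdef
  have hS : 0 < S := by positivity
  constructor
  · rintro t ⟨ht0, ht1⟩
    have h1t : (0 : ℝ) < 1 - t := by linarith
    set L : ℝ := (1 - t) * s₁ + t * s₂ with hLdef
    have hL : 0 < L := by positivity
    set Q : ℝ := (1 - t) ^ q * s₁ + t ^ q * s₂ with hQdef
    have hQ : 0 < Q := by
      have h1 : (0:ℝ) < (1 - t) ^ q := Real.rpow_pos_of_pos h1t q
      have h2 : (0:ℝ) < t ^ q := Real.rpow_pos_of_pos ht0 q
      positivity
    -- Jensen's inequality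
    have hjen := (convexOn_rpow hq1).2
      (Set.mem_Ici.mpr h1t.le) (Set.mem_Ici.mpr ht0.le)
      (show (0:ℝ) ≤ s₁ / S by positivity) (show (0:ℝ) ≤ s₂ / S by positivity)
      (show s₁ / S + s₂ / S = 1 by field_simp; exact hSdef.symm)
    simp only [smul_eq_mul] at hjen
    have hmean : s₁ / S * (1 - t) + s₂ / S * t = L / S := by
      rw [hLdef]; field_simp
    rw [hmean] at hjen
    have hQge : S * (L / S) ^ q ≤ Q := by
      have : S * ((L / S) ^ q) ≤ S * (s₁ / S * (1 - t) ^ q + s₂ / S * t ^ q) :=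
        mul_le_mul_of_nonneg_left hjen hS.le
      calc S * (L / S) ^ q ≤ S * (s₁ / S * (1 - t) ^ q + s₂ / S * t ^ q) := this
        _ = Q := by rw [hQdef]; field_simp
    have hrpos : 0 < L / S := by positivity
    have hden : 0 < S * (L / S) ^ q := by positivity
    have h1 : L / Q ≤ L / (S * (L / S) ^ q) :=
      div_le_div_of_nonneg_left hL.le hden hQge
    have h2 : L / (S * (L / S) ^ q) = (L / S) ^ (1 - q) := by
      have hne : ((L / S) : ℝ) ^ q ≠ 0 := (Real.rpow_pos_of_pos hrpos q).ne'
      rw [Real.rpow_sub hrpos, Real.rpow_one]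
      field_simp
    have h3 : (L / Q) ^ m ≤ ((L / S) ^ (1 - q)) ^ m := by
      apply Real.rpow_le_rpow (by positivity) (by rw [← h2]; exact h1) hm0
    have h4 : ((L / S) ^ (1 - q)) ^ m = S / L := by
      rw [← Real.rpow_mul hrpos.le]
      have : (1 - q) * m = -1 := by linarith [hqm]
      rw [this, Real.rpow_neg_one, inv_div]
    rw [hg t, ← hLdef, ← hQdef]
    calc L / N * (L / Q) ^ m ≤ L / N * (S / L) := by
          apply mul_le_mul_of_nonneg_left _ (by positivity)
          rw [← h4]; exact h3
      _ = S / N := by field_simp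
  · rw [hg]
    have hhalf : (0:ℝ) < (1/2:ℝ) ^ q := Real.rpow_pos_of_pos (by norm_num) q
    have h12 : (1 : ℝ) - 1 / 2 = 1 / 2 := by norm_num
    rw [h12]
    have hL : (1 / 2 : ℝ) * s₁ + 1 / 2 * s₂ = S / 2 := by rw [hSdef]; ring
    have hQ : (1 / 2 : ℝ) ^ q * s₁ + (1 / 2 : ℝ) ^ q * s₂ = (1 / 2 : ℝ) ^ q * S := by
      rw [hSdef]; ring
    rw [hL, hQ]
    have hratio : S / 2 / ((1 / 2 : ℝ) ^ q * S) = (1 / 2 : ℝ) ^ (1 - q) := by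
      rw [Real.rpow_sub (by norm_num : (0:ℝ) < 1/2), Real.rpow_one]
      field_simp
    rw [hratio, ← Real.rpow_mul (by norm_num : (0:ℝ) ≤ 1/2)]
    have h1qm : (1 - q) * m = -1 := by linarith [hqm]
    rw [h1qm, Real.rpow_neg_one]
    rw [hSdef]
    norm_num
    ring
end
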